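/- arXiv:2501.18240 — 3 statements merged into one kernel-verified Lean document; each statement's English description precedes it below -/
import Mathlib

section
/- Grönwall-type lemma: Let V be a Banach space, (Ω, F, P) a probability space, p ≥ 1, T > 0, and let X, Y, Z be V-valued stochastic processes on [0,T] with continuous paths such that E sup_{t∈[0,T]} ‖X_t‖^p, E sup_{t∈[0,T]} ‖Y_t‖^p, E sup_{t∈[0,T]} ‖Z_t‖^p are finite. Assume there exist: a Lipschitz continuous function F : V → V with Lipschitz constant L₁; a family (𝒮(s,t))_{0≤s≤t≤T} of linear operators on V with ‖𝒮(s,t)v‖ ≤ L₂‖v‖ for all v ∈ V and all 0 ≤ s ≤ t ≤ T, such that (s,t) ↦ 𝒮(s,t)v is measurable for each v ∈ V; and a measurable map τ : [0,T] → [0,T] with τ(s) ≤ s for all s. If almost surely for all 0 ≤ t ≤ T one has X_t − Y_t = Z_t + ∫₀ᵗ 𝒮(s,t)(F(X_{τ(s)}) − F(Y_{τ(s)})) ds (Bochner integral), then there exists a constant C = C(p, L₁, L₂, T) such that E sup_{t∈[0,T]} ‖X_t − Y_t‖^p ≤ C · E sup_{t∈[0,T]} ‖Z_t‖^p. -/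
open MeasureTheory Set intervalIntegral Filter in

/-- Deterministic integral-form Grönwall inequality with running supremum. -/
lemma gronwall_sup_aux {f : ℝ → ℝ} {T K a : ℝ} (hT : 0 < T) (hK : 0 ≤ K) (ha : 0 ≤ a)
    (hf : ContinuousOn f (Set.Icc 0 T)) (hf0 : ∀ t ∈ Set.Icc 0 T, 0 ≤ f t)
    (key : ∀ t ∈ Set.Icc 0 T,
      f t ≤ a + K * ∫ s in (0:ℝ)..t, sSup (f '' Set.Icc 0 s)) :
    ∀ t ∈ Set.Icc 0 T, f t ≤ a * Real.exp (K * T) := by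
  set g : ℝ → ℝ := fun s => sSup (f '' Set.Icc 0 s) with hg
  have hbdd : ∀ t ∈ Icc (0:ℝ) T, BddAbove (f '' Icc 0 t) := fun t ht =>
    (isCompact_Icc.image_of_continuousOn (hf.mono (Icc_subset_Icc_right ht.2))).bddAbove
  have hne : ∀ t : ℝ, 0 ≤ t → (f '' Icc 0 t).Nonempty := fun t ht =>
    ⟨f 0, mem_image_of_mem f (left_mem_Icc.2 ht)⟩
  have hfg : ∀ t ∈ Icc (0:ℝ) T, ∀ u ∈ Icc (0:ℝ) t, f u ≤ g t := fun t ht u hu =>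
    le_csSup (hbdd t ht) (mem_image_of_mem f hu)
  have hg0 : ∀ t ∈ Icc (0:ℝ) T, 0 ≤ g t := fun t ht =>
    (hf0 0 (left_mem_Icc.2 hT.le)).trans (hfg t ht 0 (left_mem_Icc.2 ht.1))
  have hmono : MonotoneOn g (Icc 0 T) := by
    intro s hs t ht hst
    exact csSup_le_csSup (hbdd t ht) (hne s hs.1) (image_mono (Icc_subset_Icc_right hst))
  have hint : ∀ s t : ℝ, s ∈ Icc (0:ℝ) T → t ∈ Icc (0:ℝ) T → s ≤ t →
      IntervalIntegrable g volume s t := by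
    intro s t hs ht hst
    apply MonotoneOn.intervalIntegrable
    rw [uIcc_of_le hst]
    exact hmono.mono (Icc_subset_Icc hs.1 ht.2)
  set h : ℝ → ℝ := fun t => ∫ s in (0:ℝ)..t, g s with hh
  have hadd : ∀ s t : ℝ, s ∈ Icc (0:ℝ) T → t ∈ Icc (0:ℝ) T → s ≤ t →
      h t - h s = ∫ u in s..t, g u := by
    intro s t hs ht hst
    have := integral_add_adjacent_intervals (hint 0 s (left_mem_Icc.2 hT.le) hs hs.1)
      (hint s t hs ht hst)
    simp only [hh]
    linarith [this]
  have hmonoh : ∀ s t : ℝ, s ∈ Icc (0:ℝ) T → t ∈ Icc (0:ℝ) T → s ≤ t → h s ≤ h t := by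
    intro s t hs ht hst
    have h1 : (0:ℝ) ≤ ∫ u in s..t, g u :=
      integral_nonneg hst (fun u hu => hg0 u ⟨hs.1.trans hu.1, hu.2.trans ht.2⟩)
    have := hadd s t hs ht hst
    linarith
  have key' : ∀ t ∈ Icc (0:ℝ) T, f t ≤ a + K * h t := key
  have key2 : ∀ t ∈ Icc (0:ℝ) T, g t ≤ a + K * h t := by
    intro t ht
    refine csSup_le (hne t ht.1) ?_
    rintro y ⟨u, hu, rfl⟩
    have hu' : u ∈ Icc (0:ℝ) T := ⟨hu.1, hu.2.trans ht.2⟩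
    have := key' u hu'
    have h2 := hmonoh u t hu' ht hu.2
    nlinarith
  have hconth : ContinuousOn h (Icc 0 T) := by
    have hi : IntegrableOn g (uIcc (0:ℝ) T) := by
      rw [uIcc_of_le hT.le, integrableOn_Icc_iff_integrableOn_Ioc]
      exact (hint 0 T (left_mem_Icc.2 hT.le) (right_mem_Icc.2 hT.le) hT.le).1
    have := intervalIntegral.continuousOn_primitive_interval hi
    rwa [uIcc_of_le hT.le] at this
  have hf' : ∀ x ∈ Ico (0:ℝ) T, ∀ r, g x < r →
      ∃ᶠ z in nhdsWithin x (Ioi x), (z - x)⁻¹ * (h z - h x) < r := by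
    intro x hx r hr
    set r' := (g x + r) / 2 with hr'def
    have hr'1 : g x < r' := by simp only [hr'def]; linarith
    have hr'2 : r' < r := by simp only [hr'def]; linarith
    have hfx : ContinuousWithinAt f (Icc 0 T) x := hf x ⟨hx.1, hx.2.le⟩
    obtain ⟨δ, hδ, hδ'⟩ := Metric.continuousWithinAt_iff.1 hfx (r' - g x) (by linarith)
    set m := min (x + δ) T with hm
    have hxm : x < m := lt_min (by linarith) hx.2
    have claim : ∀ z ∈ Ioo x m, (z - x)⁻¹ * (h z - h x) < r := by
      intro z hz
      have hz0 : z ∈ Icc (0:ℝ) T := ⟨hx.1.trans hz.1.le, (hz.2.trans_le (min_le_right _ _)).le⟩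
      have hgz : g z ≤ r' := by
        refine csSup_le (hne z hz0.1) ?_
        rintro y ⟨u, hu, rfl⟩
        rcases le_or_gt u x with h1 | h1
        · exact (hfg x ⟨hx.1, hx.2.le⟩ u ⟨hu.1, h1⟩).trans hr'1.le
        · have hu' : u ∈ Icc (0:ℝ) T := ⟨hu.1, hu.2.trans hz0.2⟩
          have hd : dist u x < δ := by
            rw [Real.dist_eq, abs_of_pos (by linarith : (0:ℝ) < u - x)]
            have : u < x + δ := lt_of_le_of_lt hu.2 (hz.2.trans_le (min_le_left _ _))
            linarith
          have := hδ' hu' hd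
          rw [Real.dist_eq] at this
          have h2 : f u - f x < r' - g x := lt_of_le_of_lt (le_abs_self _) this
          have h3 : f x ≤ g x := hfg x ⟨hx.1, hx.2.le⟩ x ⟨hx.1, le_refl x⟩
          linarith
      have hzx : (0:ℝ) < z - x := sub_pos.2 hz.1
      have hx' : x ∈ Icc (0:ℝ) T := ⟨hx.1, hx.2.le⟩
      have hint1 : (∫ u in x..z, g u) ≤ (z - x) * r' := by
        have : (∫ u in x..z, g u) ≤ ∫ _ in x..z, r' := by
          refine integral_mono_on hz.1.le (hint x z hx' hz0 hz.1.le)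
            intervalIntegrable_const ?_
          intro u hu
          exact (hmono ⟨hx.1.trans hu.1, hu.2.trans hz0.2⟩ hz0 hu.2).trans hgz
        rwa [intervalIntegral.integral_const, smul_eq_mul] at this
      have heq : h z - h x = ∫ u in x..z, g u := hadd x z hx' hz0 hz.1.le
      rw [heq]
      calc (z - x)⁻¹ * ∫ u in x..z, g u ≤ (z - x)⁻¹ * ((z - x) * r') :=
            mul_le_mul_of_nonneg_left hint1 (inv_nonneg.2 hzx.le)
        _ = r' := by field_simp
        _ < r := hr'2
    have hev : ∀ᶠ z in nhdsWithin x (Ioi x), (z - x)⁻¹ * (h z - h x) < r := by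
      filter_upwards [Ioo_mem_nhdsGT_of_mem ⟨le_refl x, hxm⟩] with z hz using claim z hz
    exact hev.frequently
  have key2' : ∀ x ∈ Ico (0:ℝ) T, g x ≤ K * h x + a := by
    intro x hx
    have := key2 x ⟨hx.1, hx.2.le⟩
    linarith
  have h0 : h 0 ≤ 0 := le_of_eq intervalIntegral.integral_same
  have H := le_gronwallBound_of_liminf_deriv_right_le hconth hf' h0 key2'
  intro t ht
  have h1 := key' t ht
  have h2 := H t ht
  rw [sub_zero] at h2
  rcases eq_or_lt_of_le hK with hK0 | hKpos
  · have : Real.exp (K * T) = 1 := by rw [← hK0]; simp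
    rw [this, mul_one]
    rw [← hK0] at h1
    linarith
  · rw [gronwallBound_of_K_ne_0 hKpos.ne'] at h2
    simp only [zero_mul, zero_add] at h2
    have h3 : K * h t ≤ a * (Real.exp (K * t) - 1) := by
      have := mul_le_mul_of_nonneg_left h2 hK
      calc K * h t ≤ K * (a / K * (Real.exp (K * t) - 1)) := this
        _ = a * (Real.exp (K * t) - 1) := by field_simp
    have e1 : Real.exp (K * t) ≤ Real.exp (K * T) :=
      Real.exp_le_exp.2 (mul_le_mul_of_nonneg_left ht.2 hK)
    nlinarith [mul_le_mul_of_nonneg_left e1 ha]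




open MeasureTheory

/-- Grönwall-type lemma for stochastic processes: if a.s.
`X_t - Y_t = Z_t + ∫₀ᵗ 𝒮(s,t)(F(X_{τ(s)}) - F(Y_{τ(s)})) ds` on `[0,T]`, with `F`
Lipschitz with constant `L₁`, `𝒮(s,t)` uniformly bounded by `L₂` and measurable in
`(s,t)`, and `τ(s) ≤ s`, then
`E sup_{t∈[0,T]} ‖X_t - Y_t‖^p ≤ C(p,L₁,L₂,T) · E sup_{t∈[0,T]} ‖Z_t‖^p`. -/
theorem gronwall_type_lemma
    {V : Type*} [NormedAddCommGroup V] [NormedSpace ℝ V] [CompleteSpace V]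
    [MeasurableSpace V] [BorelSpace V]
    {Ω : Type*} [MeasurableSpace Ω] (μ : Measure Ω) [IsProbabilityMeasure μ]
    (p T L₁ L₂ : ℝ) (hp : 1 ≤ p) (hT : 0 < T) (hL₁ : 0 ≤ L₁) (hL₂ : 0 ≤ L₂) :
    ∃ C : ℝ, ∀ (X Y Z : ℝ → Ω → V) (F : V → V) (𝒮 : ℝ → ℝ → V →L[ℝ] V) (τ : ℝ → ℝ),
      (∀ ω, ContinuousOn (fun t => X t ω) (Set.Icc 0 T)) →
      (∀ ω, ContinuousOn (fun t => Y t ω) (Set.Icc 0 T)) →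
      (∀ ω, ContinuousOn (fun t => Z t ω) (Set.Icc 0 T)) →
      (∫⁻ ω, ENNReal.ofReal (⨆ t : Set.Icc (0 : ℝ) T, ‖X t.1 ω‖ ^ p) ∂μ < ⊤) →
      (∫⁻ ω, ENNReal.ofReal (⨆ t : Set.Icc (0 : ℝ) T, ‖Y t.1 ω‖ ^ p) ∂μ < ⊤) →
      (∫⁻ ω, ENNReal.ofReal (⨆ t : Set.Icc (0 : ℝ) T, ‖Z t.1 ω‖ ^ p) ∂μ < ⊤) →
      LipschitzWith (Real.toNNReal L₁) F →
      (∀ s t : ℝ, 0 ≤ s → s ≤ t → t ≤ T → ∀ v : V, ‖𝒮 s t v‖ ≤ L₂ * ‖v‖) →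
      (∀ v : V, Measurable fun q : ℝ × ℝ => 𝒮 q.1 q.2 v) →
      Measurable τ →
      (∀ s : ℝ, s ∈ Set.Icc (0 : ℝ) T → τ s ∈ Set.Icc (0 : ℝ) T ∧ τ s ≤ s) →
      (∀ᵐ ω ∂μ, ∀ t ∈ Set.Icc (0 : ℝ) T,
        X t ω - Y t ω =
          Z t ω + ∫ s in (0 : ℝ)..t, (𝒮 s t) (F (X (τ s) ω) - F (Y (τ s) ω))) →
      ∫⁻ ω, ENNReal.ofReal (⨆ t : Set.Icc (0 : ℝ) T, ‖X t.1 ω - Y t.1 ω‖ ^ p) ∂μ ≤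
        ENNReal.ofReal C *
          ∫⁻ ω, ENNReal.ofReal (⨆ t : Set.Icc (0 : ℝ) T, ‖Z t.1 ω‖ ^ p) ∂μ := by
  refine ⟨Real.exp (L₁ * L₂ * T) ^ p, ?_⟩
  intro X Y Z F 𝒮 τ hX hY hZ _ _ _ hF hSb _ _ hτ heq
  set K : ℝ := L₁ * L₂ with hKdef
  have hK : 0 ≤ K := mul_nonneg hL₁ hL₂
  haveI : Nonempty (Set.Icc (0:ℝ) T) := Set.nonempty_Icc_subtype hT.le
  have hae : ∀ᵐ ω ∂μ,
      ENNReal.ofReal (⨆ t : Set.Icc (0:ℝ) T, ‖X t.1 ω - Y t.1 ω‖ ^ p) ≤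
        ENNReal.ofReal (Real.exp (K * T) ^ p) *
          ENNReal.ofReal (⨆ t : Set.Icc (0:ℝ) T, ‖Z t.1 ω‖ ^ p) := by
    filter_upwards [heq] with ω hω
    set f : ℝ → ℝ := fun t => ‖X t ω - Y t ω‖ with hfdef
    have hfc : ContinuousOn f (Set.Icc 0 T) := ((hX ω).sub (hY ω)).norm
    have hf0 : ∀ t ∈ Set.Icc (0:ℝ) T, 0 ≤ f t := fun t _ => norm_nonneg _
    -- the supremum of ‖Z‖
    have hZbdd : BddAbove (Set.range fun t : Set.Icc (0:ℝ) T => ‖Z t.1 ω‖) := by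
      have h1 : BddAbove ((fun t => ‖Z t ω‖) '' Set.Icc 0 T) :=
        (isCompact_Icc.image_of_continuousOn (hZ ω).norm).bddAbove
      rwa [Set.image_eq_range] at h1
    set aZ : ℝ := ⨆ t : Set.Icc (0:ℝ) T, ‖Z t.1 ω‖ with haZdef
    have hZle : ∀ t ∈ Set.Icc (0:ℝ) T, ‖Z t ω‖ ≤ aZ := fun t ht =>
      le_ciSup hZbdd (⟨t, ht⟩ : Set.Icc (0:ℝ) T)
    have haZ0 : 0 ≤ aZ :=
      (norm_nonneg (Z 0 ω)).trans (hZle 0 (Set.left_mem_Icc.2 hT.le))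
    -- the key integral inequality
    have key : ∀ t ∈ Set.Icc (0:ℝ) T,
        f t ≤ aZ + K * ∫ s in (0:ℝ)..t, sSup (f '' Set.Icc 0 s) := by
      intro t ht
      set g : ℝ → ℝ := fun s => sSup (f '' Set.Icc 0 s) with hgdef
      have hbdd : ∀ s ∈ Set.Icc (0:ℝ) T, BddAbove (f '' Set.Icc 0 s) := fun s hs =>
        (isCompact_Icc.image_of_continuousOn (hfc.mono (Set.Icc_subset_Icc_right hs.2))).bddAbove
      have hg0 : ∀ s ∈ Set.Icc (0:ℝ) T, 0 ≤ g s := fun s hs =>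
        (norm_nonneg _).trans
          (le_csSup (hbdd s hs) (Set.mem_image_of_mem f (Set.left_mem_Icc.2 hs.1)))
      have hmono : MonotoneOn g (Set.Icc 0 T) := by
        intro s hs u hu hsu
        exact csSup_le_csSup (hbdd u hu) ⟨f 0, Set.mem_image_of_mem f (Set.left_mem_Icc.2 hs.1)⟩
          (Set.image_mono (Set.Icc_subset_Icc_right hsu))
      have hgint : IntervalIntegrable (fun s => K * g s) volume 0 t := by
        apply IntervalIntegrable.const_mul
        apply MonotoneOn.intervalIntegrable
        rw [Set.uIcc_of_le ht.1]
        exact hmono.mono (Set.Icc_subset_Icc_right ht.2)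
      have hbound : ∀ᵐ s ∂(volume.restrict (Set.uIoc (0:ℝ) t)),
          ‖(𝒮 s t) (F (X (τ s) ω) - F (Y (τ s) ω))‖ ≤ K * g s := by
        filter_upwards [ae_restrict_mem measurableSet_uIoc] with s hs
        rw [Set.uIoc_of_le ht.1] at hs
        have hsT : s ∈ Set.Icc (0:ℝ) T := ⟨hs.1.le, hs.2.trans ht.2⟩
        have hτs := hτ s hsT
        have h1 : ‖(𝒮 s t) (F (X (τ s) ω) - F (Y (τ s) ω))‖ ≤
            L₂ * ‖F (X (τ s) ω) - F (Y (τ s) ω)‖ := hSb s t hs.1.le hs.2 ht.2 _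
        have h2 : ‖F (X (τ s) ω) - F (Y (τ s) ω)‖ ≤ L₁ * ‖X (τ s) ω - Y (τ s) ω‖ := by
          have := hF.dist_le_mul (X (τ s) ω) (Y (τ s) ω)
          rwa [dist_eq_norm, dist_eq_norm, Real.coe_toNNReal L₁ hL₁] at this
        have h3 : f (τ s) ≤ g s :=
          le_csSup (hbdd s hsT) (Set.mem_image_of_mem f ⟨hτs.1.1, hτs.2⟩)
        have h4 : ‖X (τ s) ω - Y (τ s) ω‖ = f (τ s) := rfl
        calc ‖(𝒮 s t) (F (X (τ s) ω) - F (Y (τ s) ω))‖ ≤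
              L₂ * (L₁ * ‖X (τ s) ω - Y (τ s) ω‖) :=
              h1.trans (mul_le_mul_of_nonneg_left h2 hL₂)
          _ = K * f (τ s) := by rw [h4]; ring
          _ ≤ K * g s := mul_le_mul_of_nonneg_left h3 hK
      have hni := intervalIntegral.norm_integral_le_abs_of_norm_le hbound hgint
      have habs : |∫ s in (0:ℝ)..t, K * g s| = ∫ s in (0:ℝ)..t, K * g s := by
        refine abs_of_nonneg (intervalIntegral.integral_nonneg ht.1 ?_)
        intro u hu
        exact mul_nonneg hK (hg0 u ⟨hu.1, hu.2.trans ht.2⟩)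
      rw [habs, intervalIntegral.integral_const_mul] at hni
      have hXYt : f t = ‖Z t ω + ∫ s in (0:ℝ)..t, (𝒮 s t) (F (X (τ s) ω) - F (Y (τ s) ω))‖ := by
        rw [hfdef]; simp only []; rw [hω t ht]
      rw [hXYt]
      calc ‖Z t ω + ∫ s in (0:ℝ)..t, (𝒮 s t) (F (X (τ s) ω) - F (Y (τ s) ω))‖ ≤
            ‖Z t ω‖ + ‖∫ s in (0:ℝ)..t, (𝒮 s t) (F (X (τ s) ω) - F (Y (τ s) ω))‖ :=
            norm_add_le _ _
        _ ≤ aZ + K * ∫ s in (0:ℝ)..t, g s := add_le_add (hZle t ht) hni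
    -- apply the deterministic Grönwall lemma
    have hbound := gronwall_sup_aux hT hK haZ0 hfc hf0 key
    -- pass to suprema of p-th powers
    obtain ⟨t₀, ht₀, hmax⟩ :=
      isCompact_Icc.exists_isMaxOn (Set.nonempty_Icc.2 hT.le) (hZ ω).norm
    have hmax' : ∀ t ∈ Set.Icc (0:ℝ) T, ‖Z t ω‖ ≤ ‖Z t₀ ω‖ := hmax
    have haZt₀ : aZ ≤ ‖Z t₀ ω‖ := ciSup_le fun t => hmax' t.1 t.2
    have hZpbdd : BddAbove (Set.range fun t : Set.Icc (0:ℝ) T => ‖Z t.1 ω‖ ^ p) := by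
      refine ⟨‖Z t₀ ω‖ ^ p, ?_⟩
      rintro y ⟨t, rfl⟩
      exact Real.rpow_le_rpow (norm_nonneg _) (hmax' t.1 t.2) (by linarith)
    have hsupZ : aZ ^ p ≤ ⨆ t : Set.Icc (0:ℝ) T, ‖Z t.1 ω‖ ^ p := by
      calc aZ ^ p ≤ ‖Z t₀ ω‖ ^ p := Real.rpow_le_rpow haZ0 haZt₀ (by linarith)
        _ ≤ _ := le_ciSup hZpbdd (⟨t₀, ht₀⟩ : Set.Icc (0:ℝ) T)
    have hsupXY : (⨆ t : Set.Icc (0:ℝ) T, ‖X t.1 ω - Y t.1 ω‖ ^ p) ≤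
        Real.exp (K * T) ^ p * ⨆ t : Set.Icc (0:ℝ) T, ‖Z t.1 ω‖ ^ p := by
      refine ciSup_le fun t => ?_
      have h1 : ‖X t.1 ω - Y t.1 ω‖ ≤ aZ * Real.exp (K * T) := hbound t.1 t.2
      calc ‖X t.1 ω - Y t.1 ω‖ ^ p ≤ (aZ * Real.exp (K * T)) ^ p :=
            Real.rpow_le_rpow (norm_nonneg _) h1 (by linarith)
        _ = aZ ^ p * Real.exp (K * T) ^ p := Real.mul_rpow haZ0 (Real.exp_pos _).le
        _ = Real.exp (K * T) ^ p * aZ ^ p := by ring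
        _ ≤ Real.exp (K * T) ^ p * ⨆ t : Set.Icc (0:ℝ) T, ‖Z t.1 ω‖ ^ p :=
            mul_le_mul_of_nonneg_left hsupZ (Real.rpow_nonneg (Real.exp_pos _).le p)
    calc ENNReal.ofReal (⨆ t : Set.Icc (0:ℝ) T, ‖X t.1 ω - Y t.1 ω‖ ^ p) ≤
          ENNReal.ofReal (Real.exp (K * T) ^ p * ⨆ t : Set.Icc (0:ℝ) T, ‖Z t.1 ω‖ ^ p) :=
          ENNReal.ofReal_le_ofReal hsupXY
      _ = _ := ENNReal.ofReal_mul (Real.rpow_nonneg (Real.exp_pos _).le p)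
  calc ∫⁻ ω, ENNReal.ofReal (⨆ t : Set.Icc (0:ℝ) T, ‖X t.1 ω - Y t.1 ω‖ ^ p) ∂μ ≤
        ∫⁻ ω, ENNReal.ofReal (Real.exp (K * T) ^ p) *
          ENNReal.ofReal (⨆ t : Set.Icc (0:ℝ) T, ‖Z t.1 ω‖ ^ p) ∂μ := lintegral_mono_ae hae
    _ = ENNReal.ofReal (Real.exp (L₁ * L₂ * T) ^ p) *
        ∫⁻ ω, ENNReal.ofReal (⨆ t : Set.Icc (0:ℝ) T, ‖Z t.1 ω‖ ^ p) ∂μ := by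
        rw [hKdef]
        exact lintegral_const_mul' _ _ ENNReal.ofReal_ne_top
end

section
/- Dyadic annulus block estimate: Let φ : ℝ² → ℝ satisfy 0 ≤ φ ≤ 1 and supp φ ⊆ {x ∈ ℝ² : 1/4 ≤ |x| ≤ 1}. There exists a universal constant C (independent of φ, j, t) such that for every integer j ≥ 0 and every real t > 0 one has Σ_{k ∈ ℤ² \ {0}} φ(2^{−j} k)² · min(t, (16π⁴|k|⁴)^{−1}) ≤ C · 2^{2j} · min(2^{−4j}, t). -/
set_option maxHeartbeats 1000000 in
/-- Dyadic annulus block estimate: for `φ : ℝ² → ℝ` with `0 ≤ φ ≤ 1` supported in the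
annulus `{1/4 ≤ |x| ≤ 1}`, there is a universal constant `C` (independent of `φ`, `j`, `t`)
such that for every `j ≥ 0` and `t > 0`,
`Σ_{k ∈ ℤ² \ {0}} φ(2^{-j}k)² min(t, (16π⁴|k|⁴)⁻¹) ≤ C 2^{2j} min(2^{-4j}, t)`. -/
theorem dyadic_annulus_block_estimate :
    ∃ C : ℝ, ∀ φ : ℝ × ℝ → ℝ,
      (∀ x, 0 ≤ φ x) → (∀ x, φ x ≤ 1) →
      (Function.support φ ⊆
        {x : ℝ × ℝ | 1 / 4 ≤ Real.sqrt (x.1 ^ 2 + x.2 ^ 2) ∧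
          Real.sqrt (x.1 ^ 2 + x.2 ^ 2) ≤ 1}) →
      ∀ (j : ℕ) (t : ℝ), 0 < t →
        (∑' k : ℤ × ℤ,
          if k ≠ 0 then
            φ ((2 : ℝ) ^ (-(j : ℤ)) * (k.1 : ℝ), (2 : ℝ) ^ (-(j : ℤ)) * (k.2 : ℝ)) ^ 2 *
              min t (16 * Real.pi ^ 4 * ((k.1 : ℝ) ^ 2 + (k.2 : ℝ) ^ 2) ^ 2)⁻¹
          else 0) ≤
        C * (2 : ℝ) ^ (2 * (j : ℤ)) * min ((2 : ℝ) ^ (-(4 * (j : ℤ)))) t := by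
  refine ⟨9, fun φ hφ0 hφ1 hsupp j t ht => ?_⟩
  set f : ℤ × ℤ → ℝ := fun k =>
    if k ≠ 0 then
      φ ((2 : ℝ) ^ (-(j : ℤ)) * (k.1 : ℝ), (2 : ℝ) ^ (-(j : ℤ)) * (k.2 : ℝ)) ^ 2 *
        min t (16 * Real.pi ^ 4 * ((k.1 : ℝ) ^ 2 + (k.2 : ℝ) ^ 2) ^ 2)⁻¹
    else 0 with hf
  set N : ℤ := 2 ^ j with hN
  set S : Finset (ℤ × ℤ) := Finset.Icc (-N) N ×ˢ Finset.Icc (-N) N with hS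
  set m : ℝ := min ((2 : ℝ) ^ (-(4 * (j : ℤ)))) t with hm
  have hm0 : 0 ≤ m := le_min (by positivity) ht.le
  have he : (2 : ℝ) ^ (-(j : ℤ)) = ((2 : ℝ) ^ j)⁻¹ := by
    rw [zpow_neg, zpow_natCast]
  have hepos : (0 : ℝ) < (2 : ℝ) ^ (-(j : ℤ)) := by rw [he]; positivity
  have h2j : (0 : ℝ) < (2 : ℝ) ^ j := by positivity
  -- if φ at 2^{-j} k is nonzero, then the annulus conditions hold
  have hann : ∀ k : ℤ × ℤ,
      φ ((2 : ℝ) ^ (-(j : ℤ)) * (k.1 : ℝ), (2 : ℝ) ^ (-(j : ℤ)) * (k.2 : ℝ)) ≠ 0 →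
      (1 : ℝ) / 16 ≤ ((2 : ℝ) ^ (-(j : ℤ)) * (k.1 : ℝ)) ^ 2 +
          ((2 : ℝ) ^ (-(j : ℤ)) * (k.2 : ℝ)) ^ 2 ∧
        ((2 : ℝ) ^ (-(j : ℤ)) * (k.1 : ℝ)) ^ 2 +
          ((2 : ℝ) ^ (-(j : ℤ)) * (k.2 : ℝ)) ^ 2 ≤ 1 := by
    intro k hk
    have hmem := hsupp (Function.mem_support.mpr hk)
    obtain ⟨h1, h2⟩ := hmem
    have hnn : (0 : ℝ) ≤ ((2 : ℝ) ^ (-(j : ℤ)) * (k.1 : ℝ)) ^ 2 +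
        ((2 : ℝ) ^ (-(j : ℤ)) * (k.2 : ℝ)) ^ 2 := by positivity
    have hsq := Real.sq_sqrt hnn
    constructor
    · nlinarith [Real.sqrt_nonneg (((2 : ℝ) ^ (-(j : ℤ)) * (k.1 : ℝ)) ^ 2 +
        ((2 : ℝ) ^ (-(j : ℤ)) * (k.2 : ℝ)) ^ 2)]
    · nlinarith [Real.sqrt_nonneg (((2 : ℝ) ^ (-(j : ℤ)) * (k.1 : ℝ)) ^ 2 +
        ((2 : ℝ) ^ (-(j : ℤ)) * (k.2 : ℝ)) ^ 2)]
  -- support of f is inside S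
  have hzero : ∀ k : ℤ × ℤ, k ∉ S → f k = 0 := by
    intro k hk
    rcases eq_or_ne k 0 with rfl | hk0
    · simp [hf]
    have hφz : φ ((2 : ℝ) ^ (-(j : ℤ)) * (k.1 : ℝ), (2 : ℝ) ^ (-(j : ℤ)) * (k.2 : ℝ)) = 0 := by
      by_contra hne
      obtain ⟨_, h2⟩ := hann k hne
      apply hk
      rw [hS, Finset.mem_product, Finset.mem_Icc, Finset.mem_Icc]
      have hb1 : ((2 : ℝ) ^ (-(j : ℤ)) * (k.1 : ℝ)) ^ 2 ≤ 1 := by nlinarith [sq_nonneg ((2 : ℝ) ^ (-(j : ℤ)) * (k.2 : ℝ))]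
      have hb2 : ((2 : ℝ) ^ (-(j : ℤ)) * (k.2 : ℝ)) ^ 2 ≤ 1 := by nlinarith [sq_nonneg ((2 : ℝ) ^ (-(j : ℤ)) * (k.1 : ℝ))]
      have hk1 : ((k.1 : ℝ)) ^ 2 ≤ ((2 : ℝ) ^ j) ^ 2 := by
        rw [he] at hb1
        have := mul_le_mul_of_nonneg_left hb1 (le_of_lt (by positivity : (0:ℝ) < ((2:ℝ)^j)^2))
        calc ((k.1 : ℝ)) ^ 2 = ((2:ℝ)^j)^2 * ((((2:ℝ)^j)⁻¹ * (k.1:ℝ))^2) := by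
              field_simp
          _ ≤ ((2:ℝ)^j)^2 * 1 := by nlinarith
          _ = ((2:ℝ)^j)^2 := by ring
      have hk2 : ((k.2 : ℝ)) ^ 2 ≤ ((2 : ℝ) ^ j) ^ 2 := by
        rw [he] at hb2
        calc ((k.2 : ℝ)) ^ 2 = ((2:ℝ)^j)^2 * ((((2:ℝ)^j)⁻¹ * (k.2:ℝ))^2) := by
              field_simp
          _ ≤ ((2:ℝ)^j)^2 * 1 := by nlinarith
          _ = ((2:ℝ)^j)^2 := by ring
      have hN1 : ((N : ℝ)) = (2:ℝ)^j := by rw [hN]; push_cast; ring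
      have ha1 : -(N:ℝ) ≤ (k.1:ℝ) ∧ (k.1:ℝ) ≤ (N:ℝ) := by
        rw [hN1]; constructor <;> nlinarith
      have ha2 : -(N:ℝ) ≤ (k.2:ℝ) ∧ (k.2:ℝ) ≤ (N:ℝ) := by
        rw [hN1]; constructor <;> nlinarith
      exact ⟨⟨by exact_mod_cast ha1.1, by exact_mod_cast ha1.2⟩,
             ⟨by exact_mod_cast ha2.1, by exact_mod_cast ha2.2⟩⟩
    simp only [hf]
    rw [if_pos hk0, hφz]
    ring
  -- pointwise bound on S
  have hbound : ∀ k : ℤ × ℤ, f k ≤ m := by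
    intro k
    rcases eq_or_ne k 0 with rfl | hk0
    · simpa [hf] using hm0
    rcases eq_or_ne (φ ((2 : ℝ) ^ (-(j : ℤ)) * (k.1 : ℝ), (2 : ℝ) ^ (-(j : ℤ)) * (k.2 : ℝ))) 0
      with hφz | hφn
    · simp only [hf]
      rw [if_pos hk0, hφz]
      have h0 : (0:ℝ) ^ 2 * (t ⊓ (16 * Real.pi ^ 4 * ((k.1:ℝ) ^ 2 + (k.2:ℝ) ^ 2) ^ 2)⁻¹) = 0 := by
        ring
      rw [h0]
      exact hm0
    obtain ⟨h1, _⟩ := hann k hφn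
    -- k₁²+k₂² ≥ 2^{2j}/16
    have hsum : ((2:ℝ)^j)^2 / 16 ≤ (k.1:ℝ)^2 + (k.2:ℝ)^2 := by
      rw [he] at h1
      have h := mul_le_mul_of_nonneg_left h1 (le_of_lt (by positivity : (0:ℝ) < ((2:ℝ)^j)^2))
      calc ((2:ℝ)^j)^2 / 16 = ((2:ℝ)^j)^2 * (1/16) := by ring
        _ ≤ ((2:ℝ)^j)^2 * ((((2:ℝ)^j)⁻¹ * (k.1:ℝ))^2 + (((2:ℝ)^j)⁻¹ * (k.2:ℝ))^2) := h
        _ = (k.1:ℝ)^2 + (k.2:ℝ)^2 := by field_simp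
    have hpi : (2:ℝ) ≤ Real.pi := by linarith [Real.pi_gt_three]
    have hinv : (16 * Real.pi ^ 4 * ((k.1 : ℝ) ^ 2 + (k.2 : ℝ) ^ 2) ^ 2)⁻¹ ≤
        (2 : ℝ) ^ (-(4 * (j : ℤ))) := by
      have h4 : (2 : ℝ) ^ (-(4 * (j : ℤ))) = (((2:ℝ)^j)^4)⁻¹ := by
        rw [zpow_neg]
        congr 1
        rw [show (4 * (j:ℤ)) = ((4 * j : ℕ) : ℤ) by push_cast; ring, zpow_natCast, pow_mul']
      rw [h4]
      have hpos : (0:ℝ) < ((2:ℝ)^j)^4 := by positivity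
      apply inv_anti₀ hpos
      have : ((2:ℝ)^j)^4 / 256 ≤ ((k.1:ℝ)^2 + (k.2:ℝ)^2)^2 := by nlinarith [h2j]
      have hpi2 : (4:ℝ) ≤ Real.pi ^ 2 := by nlinarith
      have hpi4 : (16:ℝ) ≤ Real.pi ^ 4 := by nlinarith
      nlinarith [sq_nonneg ((k.1:ℝ)^2 + (k.2:ℝ)^2)]
    have hφsq : φ ((2 : ℝ) ^ (-(j : ℤ)) * (k.1 : ℝ), (2 : ℝ) ^ (-(j : ℤ)) * (k.2 : ℝ)) ^ 2 ≤ 1 := by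
      have := hφ0 ((2 : ℝ) ^ (-(j : ℤ)) * (k.1 : ℝ), (2 : ℝ) ^ (-(j : ℤ)) * (k.2 : ℝ))
      have := hφ1 ((2 : ℝ) ^ (-(j : ℤ)) * (k.1 : ℝ), (2 : ℝ) ^ (-(j : ℤ)) * (k.2 : ℝ))
      nlinarith
    have hminle : min t (16 * Real.pi ^ 4 * ((k.1 : ℝ) ^ 2 + (k.2 : ℝ) ^ 2) ^ 2)⁻¹ ≤ m := by
      rw [hm, min_comm ((2:ℝ) ^ (-(4 * (j:ℤ)))) t]
      exact min_le_min le_rfl hinv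
    have hminnn : 0 ≤ min t (16 * Real.pi ^ 4 * ((k.1 : ℝ) ^ 2 + (k.2 : ℝ) ^ 2) ^ 2)⁻¹ := by
      apply le_min ht.le; positivity
    calc f k = φ ((2 : ℝ) ^ (-(j : ℤ)) * (k.1 : ℝ), (2 : ℝ) ^ (-(j : ℤ)) * (k.2 : ℝ)) ^ 2 *
          min t (16 * Real.pi ^ 4 * ((k.1 : ℝ) ^ 2 + (k.2 : ℝ) ^ 2) ^ 2)⁻¹ := by
          simp only [hf]; rw [if_pos hk0]
      _ ≤ 1 * min t (16 * Real.pi ^ 4 * ((k.1 : ℝ) ^ 2 + (k.2 : ℝ) ^ 2) ^ 2)⁻¹ :=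
          mul_le_mul_of_nonneg_right hφsq hminnn
      _ = min t (16 * Real.pi ^ 4 * ((k.1 : ℝ) ^ 2 + (k.2 : ℝ) ^ 2) ^ 2)⁻¹ := one_mul _
      _ ≤ m := hminle
  -- compute the tsum as a finite sum
  have htsum : (∑' k : ℤ × ℤ, f k) = ∑ k ∈ S, f k := tsum_eq_sum hzero
  have hcard : (S.card : ℝ) ≤ 9 * (2:ℝ) ^ (2 * (j:ℤ)) := by
    have h1 : (Finset.Icc (-N) N).card = (2 * N + 1).toNat := by
      rw [Int.card_Icc]; congr 1; ring
    have h2 : S.card = (2 * N + 1).toNat ^ 2 := by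
      rw [hS, Finset.card_product, h1]; ring
    have hNpos : 0 < N := by positivity
    have hNN : (0:ℤ) ≤ 2 * N + 1 := by rw [hN]; positivity
    have h3 : ((2 * N + 1).toNat : ℝ) = 2 * (N:ℝ) + 1 := by
      have := Int.toNat_of_nonneg hNN
      have : (((2 * N + 1).toNat : ℤ) : ℝ) = ((2 * N + 1 : ℤ) : ℝ) := by exact_mod_cast this
      push_cast at this ⊢
      linarith
    have hN1 : ((N : ℝ)) = (2:ℝ)^j := by rw [hN]; push_cast; ring
    have h4 : (2:ℝ) ^ (2 * (j:ℤ)) = ((2:ℝ)^j)^2 := by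
      rw [show (2 * (j:ℤ)) = ((2 * j : ℕ) : ℤ) by push_cast; ring, zpow_natCast, pow_mul']
    rw [h2, h4]
    push_cast
    rw [h3, hN1]
    have h1le : (1:ℝ) ≤ (2:ℝ)^j := one_le_pow₀ (by norm_num)
    nlinarith
  rw [htsum]
  calc (∑ k ∈ S, f k) ≤ ∑ k ∈ S, m := Finset.sum_le_sum fun k _ => hbound k
    _ = (S.card : ℝ) * m := by rw [Finset.sum_const, nsmul_eq_mul]
    _ ≤ 9 * (2:ℝ) ^ (2 * (j:ℤ)) * m := mul_le_mul_of_nonneg_right hcard hm0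
end

section
/- High-frequency variance tail estimate: For every ε₀ ∈ (0, 1/2) there exists a constant C = C(ε₀) such that for all real N ≥ 1 and all real τ > 0 one has Σ_{k ∈ ℤ², |k| > N} (1 − e^{−32π⁴|k|⁴ τ}) / (32π⁴|k|⁴) ≤ C τ^{ε₀} N^{−2+4ε₀}. -/
open Real

lemma key_ratio {p a : ℝ} (hp : 0 < p) (ha : 2 ≤ a) :
    1 + p / a ≤ (a / (a - 1)) ^ p := by
  have ha1 : (0:ℝ) < a - 1 := by linarith
  have ha0 : (0:ℝ) < a := by linarith
  have hxpos : (0:ℝ) < a / (a-1) := by positivity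
  rcases le_or_gt p 1 with h1 | h1
  · have hs : (-1:ℝ) ≤ -1/a := by
      rw [neg_div, neg_le_neg_iff, div_le_one ha0]; linarith
    have hb := rpow_one_add_le_one_add_mul_self hs hp.le h1
    have he : (1:ℝ) + -1/a = (a-1)/a := by field_simp; ring
    have he2 : (1:ℝ) + p * (-1/a) = 1 - p/a := by ring
    rw [he, he2] at hb
    have hinv : ((a-1)/a) ^ p = ((a/(a-1)) ^ p)⁻¹ := by
      rw [← Real.inv_rpow hxpos.le]
      congr 1
      field_simp
    rw [hinv] at hb
    have hpa : p / a ≤ 1/2 := by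
      rw [div_le_div_iff₀ ha0 (by norm_num)]; linarith
    have hpa0 : 0 < p / a := by positivity
    have h2 : 0 < 1 - p/a := by linarith
    have hrp : 0 < (a/(a-1)) ^ p := Real.rpow_pos_of_pos hxpos p
    rw [inv_le_iff_one_le_mul₀ hrp] at hb
    have : (1 + p/a) * (1 - p/a) ≤ 1 := by nlinarith
    nlinarith
  · have hs : (-1:ℝ) ≤ 1/(a-1) := by
      have : (0:ℝ) < 1/(a-1) := by positivity
      linarith
    have hb := one_add_mul_self_le_rpow_one_add hs h1.le
    have he : (1:ℝ) + 1/(a-1) = a/(a-1) := by field_simp; ring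
    rw [he] at hb
    refine le_trans ?_ hb
    have h3 : p / a ≤ p / (a-1) := div_le_div_of_nonneg_left hp.le ha1 (by linarith)
    rw [mul_one_div]
    linarith

lemma telescope_step {r a : ℝ} (hr : 1 < r) (ha : 2 ≤ a) :
    (r - 1) * a ^ (-r) ≤ (a - 1) ^ (1 - r) - a ^ (1 - r) := by
  have ha0 : (0:ℝ) < a := by linarith
  have ha1 : (0:ℝ) < a - 1 := by linarith
  have h := key_ratio (p := r - 1) (a := a) (by linarith) ha
  have harp : (0:ℝ) < a ^ (1 - r) := Real.rpow_pos_of_pos ha0 _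
  have h2 := mul_le_mul_of_nonneg_right h harp.le
  have e1 : (a / (a-1)) ^ (r-1) * a ^ (1-r) = (a-1) ^ (1-r) := by
    rw [Real.div_rpow ha0.le ha1.le, div_mul_eq_mul_div, ← Real.rpow_add ha0]
    norm_num
    rw [← Real.rpow_neg ha1.le]
    ring_nf
  rw [e1] at h2
  have e2 : (1 + (r-1)/a) * a ^ (1-r) = a ^ (1-r) + (r-1) * a ^ (-r) := by
    have e3 : a ^ (1-r) / a = a ^ (-r) := by
      nth_rewrite 2 [← Real.rpow_one a]
      rw [← Real.rpow_sub ha0]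
      ring_nf
    field_simp
    rw [← e3]
    field_simp
  rw [e2] at h2
  linarith

lemma finite_tail_sum {r c : ℝ} (hr : 1 < r) (hc : 0 < c) (K : ℕ) :
    ∑ n ∈ Finset.range K, (if c < (n:ℝ) then (n:ℝ) ^ (-r) else 0)
      ≤ (1 + 1/(r-1)) * c ^ (1-r) := by
  set m₀ : ℕ := ⌊c⌋₊ + 1 with hm₀
  have hm₀1 : 1 ≤ m₀ := Nat.le_add_left 1 ⌊c⌋₊
  have hcm : c < (m₀:ℝ) := by
    push_cast [hm₀]
    exact Nat.lt_floor_add_one c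
  have hmc : (1:ℝ) ≤ (m₀:ℝ) := by exact_mod_cast hm₀1
  have hzero : ∀ n < m₀, ¬ (c < (n:ℝ)) := by
    intro n hn
    push_neg
    have : n ≤ ⌊c⌋₊ := Nat.lt_succ_iff.mp hn
    calc (n:ℝ) ≤ (⌊c⌋₊ : ℝ) := by exact_mod_cast this
      _ ≤ c := Nat.floor_le hc.le
  -- strengthened claim for K ≥ m₀ + 1
  have claim : ∀ K, m₀ + 1 ≤ K →
      ∑ n ∈ Finset.range K, (if c < (n:ℝ) then (n:ℝ) ^ (-r) else 0)
        ≤ (m₀:ℝ) ^ (-r) + ((m₀:ℝ) ^ (1-r) - ((K:ℝ) - 1) ^ (1-r)) / (r-1) := by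
    intro K hK
    induction K, hK using Nat.le_induction with
    | base =>
      rw [Finset.sum_range_succ, Finset.sum_eq_zero (fun n hn => by
        rw [if_neg (hzero n (Finset.mem_range.mp hn))])]
      rw [if_pos hcm]
      push_cast
      simp
    | succ K hK ih =>
      rw [Finset.sum_range_succ]
      have hK2 : (2:ℝ) ≤ (K:ℝ) := by
        have : 2 ≤ K := le_trans (by omega) hK
        exact_mod_cast this
      have hcK : c < (K:ℝ) := lt_of_lt_of_le hcm (by exact_mod_cast le_trans (by omega) hK)
      rw [if_pos hcK]
      have hstep := telescope_step hr hK2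
      have hr1 : (0:ℝ) < r - 1 := by linarith
      have : (K:ℝ) ^ (-r) ≤ (((K:ℝ)-1) ^ (1-r) - (K:ℝ) ^ (1-r)) / (r-1) := by
        rw [le_div_iff₀ hr1]
        linarith [hstep]
      push_cast [hm₀]
      push_cast [hm₀] at ih
      rw [show ((K:ℝ)+1-1) = (K:ℝ) by ring]
      have hsum : (((⌊c⌋₊:ℝ)+1)^(1-r) - ((K:ℝ)-1)^(1-r))/(r-1)
            + ((((K:ℝ)-1)^(1-r)) - (K:ℝ)^(1-r))/(r-1)
          = (((⌊c⌋₊:ℝ)+1)^(1-r) - (K:ℝ)^(1-r))/(r-1) := by ring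
      linarith [ih, this, hsum]
  -- now general K
  have hr1 : (0:ℝ) < r - 1 := by linarith
  have main : ∀ K, ∑ n ∈ Finset.range K, (if c < (n:ℝ) then (n:ℝ) ^ (-r) else 0)
      ≤ (m₀:ℝ) ^ (-r) + (m₀:ℝ) ^ (1-r) / (r-1) := by
    intro K
    rcases le_or_gt K (m₀ + 1) with h | h
    · calc _ ≤ ∑ n ∈ Finset.range (m₀+1+1), (if c < (n:ℝ) then (n:ℝ) ^ (-r) else 0) := by
            apply Finset.sum_le_sum_of_subset_of_nonneg
            · exact Finset.range_subset_range.mpr (by omega)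
            · intro i _ _
              positivity
        _ ≤ _ := by
            have h2 := claim (m₀+1+1) (by omega)
            have hpos : 0 ≤ ((m₀+1+1:ℕ):ℝ) - 1 := by push_cast; linarith
            have : (0:ℝ) ≤ (((m₀+1+1:ℕ):ℝ) - 1) ^ (1-r) := Real.rpow_nonneg hpos _
            refine h2.trans ?_
            have := div_le_div_of_nonneg_right (c := r-1) (by linarith : (m₀:ℝ)^(1-r) - (((m₀+1+1:ℕ):ℝ)-1)^(1-r) ≤ (m₀:ℝ)^(1-r)) hr1.le
            linarith
    · have h2 := claim K (by omega)
      have hpos : 0 ≤ (K:ℝ) - 1 := by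
        have : (1:ℝ) ≤ (K:ℝ) := by exact_mod_cast le_trans (by omega) h.le
        linarith
      have h3 : (0:ℝ) ≤ ((K:ℝ) - 1) ^ (1-r) := Real.rpow_nonneg hpos _
      refine h2.trans ?_
      have := div_le_div_of_nonneg_right (c := r-1) (by linarith : (m₀:ℝ)^(1-r) - ((K:ℝ)-1)^(1-r) ≤ (m₀:ℝ)^(1-r)) hr1.le
      linarith
  refine (main K).trans ?_
  have e1 : (m₀:ℝ) ^ (-r) ≤ (m₀:ℝ) ^ (1-r) :=
    Real.rpow_le_rpow_of_exponent_le hmc (by linarith)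
  have e2 : (m₀:ℝ) ^ (1-r) ≤ c ^ (1-r) :=
    rpow_le_rpow_of_nonpos hc hcm.le (by linarith)
  have e3 : (0:ℝ) ≤ (m₀:ℝ) ^ (1-r) := Real.rpow_nonneg (by linarith) _
  have : (m₀:ℝ) ^ (-r) + (m₀:ℝ) ^ (1-r) / (r-1) ≤ (1 + 1/(r-1)) * (m₀:ℝ) ^ (1-r) := by
    rw [add_mul, one_mul, one_div, inv_mul_eq_div]
    gcongr
  refine this.trans ?_
  have h4 : (0:ℝ) ≤ 1 + 1/(r-1) := by positivity
  exact mul_le_mul_of_nonneg_left e2 h4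

lemma tail_sum_nat {r c : ℝ} (hr : 1 < r) (hc : 0 < c)
    (hfin : ∀ K : ℕ, ∑ n ∈ Finset.range K, (if c < (n:ℝ) then (n:ℝ) ^ (-r) else 0)
      ≤ (1 + 1/(r-1)) * c ^ (1-r)) :
    ∑' n : ℕ, (if c < (n:ℝ) then ENNReal.ofReal ((n:ℝ) ^ (-r)) else 0)
      ≤ ENNReal.ofReal ((1 + 1/(r-1)) * c ^ (1-r)) := by
  apply ENNReal.summable.tsum_le_of_sum_range_le
  intro K
  have he : ∀ n : ℕ, (if c < (n:ℝ) then ENNReal.ofReal ((n:ℝ) ^ (-r)) else 0)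
      = ENNReal.ofReal (if c < (n:ℝ) then (n:ℝ) ^ (-r) else 0) := by
    intro n; split <;> simp
  simp_rw [he]
  rw [← ENNReal.ofReal_sum_of_nonneg (by intro i _; split <;> positivity)]
  exact ENNReal.ofReal_le_ofReal (hfin K)

lemma neg_part_le {f : ℤ → ENNReal} :
    ∑' n : ℕ, f (-(n+1)) ≤ ∑' n : ℤ, f n :=
  ENNReal.tsum_comp_le_tsum_of_injective (fun a b hab => by omega) f

lemma hfv_inner_sum {a : ℝ} (ha : 1 ≤ a) :
    ∑' n : ℤ, ENNReal.ofReal ((a^2 + (n:ℝ)^2)⁻¹) ≤ ENNReal.ofReal (5 / a) := by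
  have ha0 : (0:ℝ) < a := by linarith
  set f : ℤ → ENNReal := fun n => ENNReal.ofReal ((a^2 + (n:ℝ)^2)⁻¹) with hf
  have hsplit := tsum_of_nat_of_neg_add_one (f := f) ENNReal.summable ENNReal.summable
  have hS : ∑' n : ℕ, ENNReal.ofReal ((a^2 + ((n:ℝ)+1)^2)⁻¹) ≤ ENNReal.ofReal (2/a) := by
    have hterm : ∀ n : ℕ, ENNReal.ofReal ((a^2 + ((n:ℝ)+1)^2)⁻¹)
        ≤ ENNReal.ofReal (2*(a+n)⁻¹ - 2*(a+n+1)⁻¹) := by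
      intro n
      apply ENNReal.ofReal_le_ofReal
      have h1 : (0:ℝ) < a + n := by positivity
      have h2 : (0:ℝ) < a + n + 1 := by positivity
      have he : 2*(a+n)⁻¹ - 2*(a+n+1)⁻¹ = 2 * ((a+n)*(a+n+1))⁻¹ := by
        field_simp
        ring
      rw [he]
      have hq : (a+n)*(a+n+1)/2 ≤ a^2 + ((n:ℝ)+1)^2 := by nlinarith [sq_nonneg (a - (n:ℝ) - 1)]
      have hpos : (0:ℝ) < (a+n)*(a+n+1)/2 := by positivity
      have := inv_anti₀ hpos hq
      have he2 : ((a+n)*(a+n+1)/2)⁻¹ = 2 * ((a+n)*(a+n+1))⁻¹ := by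
        field_simp
      rw [he2] at this
      exact this
    calc ∑' n : ℕ, ENNReal.ofReal ((a^2 + ((n:ℝ)+1)^2)⁻¹)
        ≤ ∑' n : ℕ, ENNReal.ofReal (2*(a+n)⁻¹ - 2*(a+n+1)⁻¹) := ENNReal.tsum_le_tsum hterm
      _ ≤ ENNReal.ofReal (2/a) := by
          apply ENNReal.summable.tsum_le_of_sum_range_le
          intro K
          rw [← ENNReal.ofReal_sum_of_nonneg]
          · apply ENNReal.ofReal_le_ofReal
            have : ∀ i ∈ Finset.range K, 2*(a+(i:ℝ))⁻¹ - 2*(a+(i:ℝ)+1)⁻¹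
                = (fun i : ℕ => 2*(a+(i:ℝ))⁻¹) i - (fun i : ℕ => 2*(a+(i:ℝ))⁻¹) (i+1) := by
              intro i _; push_cast; ring_nf
            rw [Finset.sum_congr rfl this, Finset.sum_range_sub' (fun i : ℕ => 2*(a+(i:ℝ))⁻¹) K]
            have : (0:ℝ) ≤ 2*(a+(K:ℝ))⁻¹ := by positivity
            simp only [Nat.cast_zero, add_zero]
            rw [div_eq_mul_inv]
            linarith
          · intro i _
            have h1 : (0:ℝ) < a + i := by positivity
            have : (a+(i:ℝ)+1)⁻¹ ≤ (a+(i:ℝ))⁻¹ := by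
              apply inv_anti₀ h1; linarith
            linarith
  have hnat : ∑' n : ℕ, f n ≤ ENNReal.ofReal (1/a) + ENNReal.ofReal (2/a) := by
    rw [tsum_eq_zero_add' ENNReal.summable]
    apply add_le_add
    · apply ENNReal.ofReal_le_ofReal
      have e0 : ((0:ℤ):ℝ)^2 = 0 := by norm_num
      simp only [hf, e0, add_zero, one_div]
      apply inv_anti₀ ha0
      nlinarith
    · calc ∑' n : ℕ, f ((n:ℕ)+1 : ℕ) = ∑' n : ℕ, ENNReal.ofReal ((a^2 + ((n:ℝ)+1)^2)⁻¹) := by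
            apply tsum_congr; intro n
            simp only [hf]
            push_cast
            ring_nf
        _ ≤ _ := hS
  have hneg : ∑' n : ℕ, f (-((n:ℤ)+1)) ≤ ENNReal.ofReal (2/a) := by
    have : ∀ n : ℕ, f (-((n:ℤ)+1)) = ENNReal.ofReal ((a^2 + ((n:ℝ)+1)^2)⁻¹) := by
      intro n
      simp only [hf]
      congr 2
      push_cast
      ring
    calc ∑' n : ℕ, f (-((n:ℤ)+1)) = ∑' n : ℕ, ENNReal.ofReal ((a^2 + ((n:ℝ)+1)^2)⁻¹) :=
          tsum_congr this
      _ ≤ _ := hS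
  rw [hsplit]
  calc ∑' n : ℕ, f (n:ℤ) + ∑' n : ℕ, f (-((n:ℤ)+1))
      ≤ (ENNReal.ofReal (1/a) + ENNReal.ofReal (2/a)) + ENNReal.ofReal (2/a) :=
        add_le_add hnat hneg
    _ = ENNReal.ofReal (1/a + 2/a + 2/a) := by
        rw [ENNReal.ofReal_add (by positivity) (by positivity),
          ENNReal.ofReal_add (by positivity) (by positivity)]
    _ = ENNReal.ofReal (5/a) := by congr 1; field_simp; ring

lemma hfv_tail_sum_int {r c : ℝ} (hr : 1 < r) (hc : 0 < c) :
    ∑' n : ℤ, (if c < |(n:ℝ)| then ENNReal.ofReal (|(n:ℝ)| ^ (-r)) else 0)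
      ≤ ENNReal.ofReal (2 * ((1 + 1/(r-1)) * c ^ (1-r))) := by
  have hfin : ∀ K : ℕ, ∑ n ∈ Finset.range K, (if c < (n:ℝ) then (n:ℝ) ^ (-r) else 0)
      ≤ (1 + 1/(r-1)) * c ^ (1-r) := fun K => finite_tail_sum hr hc K
  have hnatb := tail_sum_nat hr hc hfin
  set f : ℤ → ENNReal := fun n => if c < |(n:ℝ)| then ENNReal.ofReal (|(n:ℝ)| ^ (-r)) else 0
    with hf
  have hsplit := tsum_of_nat_of_neg_add_one (f := f) ENNReal.summable ENNReal.summable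
  set g : ℕ → ENNReal := fun n => if c < (n:ℝ) then ENNReal.ofReal ((n:ℝ) ^ (-r)) else 0 with hg
  have hfg : ∀ n : ℕ, f (n:ℤ) = g n := by
    intro n
    simp only [hf, hg, Int.cast_natCast,
      abs_of_nonneg (Nat.cast_nonneg n : (0:ℝ) ≤ (n:ℝ))]
  have hfg' : ∀ n : ℕ, f (-((n:ℤ)+1)) = g (n+1) := by
    intro n
    simp only [hf, hg]
    push_cast
    rw [abs_neg, abs_of_nonneg (show (0:ℝ) ≤ (n:ℝ)+1 by positivity)]
  have hnat : ∑' n : ℕ, f (n:ℤ) = ∑' n : ℕ, g n := tsum_congr hfg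
  have hneg : ∑' n : ℕ, f (-((n:ℤ)+1)) ≤ ∑' n : ℕ, g n := by
    calc ∑' n : ℕ, f (-((n:ℤ)+1)) = ∑' n : ℕ, g (n+1) := tsum_congr hfg'
      _ ≤ ∑' n : ℕ, g n := ENNReal.tsum_comp_le_tsum_of_injective Nat.succ_injective g
  rw [hsplit, hnat]
  calc ∑' n : ℕ, g n + ∑' n : ℕ, f (-((n:ℤ)+1))
      ≤ ENNReal.ofReal ((1 + 1/(r-1)) * c ^ (1-r)) + ENNReal.ofReal ((1 + 1/(r-1)) * c ^ (1-r)) :=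
        add_le_add hnatb (hneg.trans hnatb)
    _ = ENNReal.ofReal (2 * ((1 + 1/(r-1)) * c ^ (1-r))) := by
        rw [← ENNReal.ofReal_add ?h ?h]
        · congr 1; ring
        case h =>
          have h1 : (0:ℝ) < r - 1 := by linarith
          have h2 : (0:ℝ) ≤ c ^ (1-r) := Real.rpow_nonneg hc.le _
          positivity

lemma hfv_pointwise {ε₀ τ a : ℝ} (hε0 : 0 < ε₀) (hε1 : ε₀ ≤ 1) (hτ : 0 < τ) (ha : 0 < a) :
    (1 - Real.exp (-(a*τ)))/a ≤ τ^ε₀ * a^(ε₀-1) := by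
  have hx : 0 < a*τ := mul_pos ha hτ
  have h1 : 1 - Real.exp (-(a*τ)) ≤ (a*τ)^ε₀ := by
    rcases le_or_gt (a*τ) 1 with h | h
    · have h2 : 1 - Real.exp (-(a*τ)) ≤ a*τ := by
        have := Real.add_one_le_exp (-(a*τ)); linarith
      refine h2.trans ?_
      calc a*τ = (a*τ)^(1:ℝ) := (Real.rpow_one _).symm
        _ ≤ (a*τ)^ε₀ := Real.rpow_le_rpow_of_exponent_ge hx h hε1
    · have h3 : (1:ℝ) ≤ (a*τ)^ε₀ := Real.one_le_rpow h.le hε0.le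
      have := Real.exp_pos (-(a*τ)); linarith
  calc (1 - Real.exp (-(a*τ)))/a ≤ (a*τ)^ε₀ / a := by gcongr
    _ = τ^ε₀ * a^(ε₀-1) := by
        rw [Real.mul_rpow ha.le hτ.le, Real.rpow_sub ha, Real.rpow_one]
        ring

lemma hfv_tsum_real_le {ι : Type*} {F : ι → ℝ} {R : ℝ} (hF : ∀ k, 0 ≤ F k) (hR : 0 ≤ R)
    (h : ∑' k, ENNReal.ofReal (F k) ≤ ENNReal.ofReal R) : ∑' k, F k ≤ R := by
  by_cases hs : Summable F
  · rw [← ENNReal.ofReal_le_ofReal_iff hR, ENNReal.ofReal_tsum_of_nonneg hF hs]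
    exact h
  · rw [tsum_eq_zero_of_not_summable hs]
    exact hR

lemma hfv_row {ε₀ : ℝ} (hε2 : ε₀ < 1/2) {c : ℝ} (hc : 0 < c) (m : ℤ) :
    ∑' n : ℤ, (if c < |(m:ℝ)| then
        ENNReal.ofReal (|(m:ℝ)| ^ (4*ε₀-2) * (((m:ℝ)^2 + (n:ℝ)^2)⁻¹)) else 0)
      ≤ (if c < |(m:ℝ)| then ENNReal.ofReal (5 * |(m:ℝ)| ^ (-(3-4*ε₀))) else 0) := by
  by_cases h : c < |(m:ℝ)|
  · simp only [if_pos h]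
    have hm0 : (0:ℝ) < |(m:ℝ)| := lt_trans hc h
    have ham : (1:ℝ) ≤ |(m:ℝ)| := by
      have hm : m ≠ 0 := by
        intro hm; rw [hm] at hm0; simp at hm0
      have := Int.one_le_abs hm
      calc (1:ℝ) ≤ ((|m| : ℤ) : ℝ) := by exact_mod_cast this
        _ = |(m:ℝ)| := by push_cast; ring
    have hrnn : (0:ℝ) ≤ |(m:ℝ)| ^ (4*ε₀-2) := Real.rpow_nonneg (abs_nonneg _) _
    calc ∑' n : ℤ, ENNReal.ofReal (|(m:ℝ)| ^ (4*ε₀-2) * (((m:ℝ)^2 + (n:ℝ)^2)⁻¹))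
        = ENNReal.ofReal (|(m:ℝ)| ^ (4*ε₀-2))
            * ∑' n : ℤ, ENNReal.ofReal ((|(m:ℝ)|^2 + (n:ℝ)^2)⁻¹) := by
          rw [← ENNReal.tsum_mul_left]
          apply tsum_congr
          intro n
          rw [← ENNReal.ofReal_mul hrnn, sq_abs]
      _ ≤ ENNReal.ofReal (|(m:ℝ)| ^ (4*ε₀-2)) * ENNReal.ofReal (5 / |(m:ℝ)|) :=
          mul_le_mul_right (hfv_inner_sum ham) _
      _ = ENNReal.ofReal (5 * |(m:ℝ)| ^ (-(3-4*ε₀))) := by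
          rw [← ENNReal.ofReal_mul hrnn]
          congr 1
          rw [div_eq_mul_inv, ← Real.rpow_neg_one |(m:ℝ)|]
          rw [show (5:ℝ) * |(m:ℝ)| ^ (-1:ℝ) = |(m:ℝ)| ^ (-1:ℝ) * 5 by ring, ← mul_assoc,
            ← Real.rpow_add hm0]
          rw [show (4*ε₀-2) + (-1:ℝ) = -(3-4*ε₀) by ring]
          ring
  · simp [h]

/-- High-frequency variance tail estimate: for every `ε₀ ∈ (0, 1/2)` there is `C = C(ε₀)`
such that for all `N ≥ 1` and `τ > 0`,
`Σ_{k ∈ ℤ², |k| > N} (1 - e^{-32π⁴|k|⁴τ})/(32π⁴|k|⁴) ≤ C τ^{ε₀} N^{-2+4ε₀}`. -/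
theorem high_frequency_variance_tail_estimate (ε₀ : ℝ)
    (hε : ε₀ ∈ Set.Ioo (0 : ℝ) (1 / 2)) :
    ∃ C : ℝ, ∀ N : ℝ, 1 ≤ N → ∀ τ : ℝ, 0 < τ →
      (∑' k : ℤ × ℤ,
        if N < Real.sqrt ((k.1 : ℝ) ^ 2 + (k.2 : ℝ) ^ 2) then
          (1 - Real.exp (-(32 * Real.pi ^ 4 * ((k.1 : ℝ) ^ 2 + (k.2 : ℝ) ^ 2) ^ 2 * τ))) /
            (32 * Real.pi ^ 4 * ((k.1 : ℝ) ^ 2 + (k.2 : ℝ) ^ 2) ^ 2)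
        else 0) ≤ C * τ ^ ε₀ * N ^ (-2 + 4 * ε₀) := by
  obtain ⟨hε0, hε2⟩ := hε
  set r : ℝ := 3 - 4*ε₀ with hrdef
  have hr : (1:ℝ) < r := by rw [hrdef]; linarith
  have hr1 : (0:ℝ) < r - 1 := by linarith
  have hπ : (0:ℝ) < 32*Real.pi^4 := by positivity
  have hK : (0:ℝ) < 1 + 1/(r-1) := by positivity
  have hCb : (0:ℝ) < (32*Real.pi^4)^(ε₀-1) := Real.rpow_pos_of_pos hπ _
  refine ⟨(32*Real.pi^4)^(ε₀-1) * (40*(1+1/(r-1))), ?_⟩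
  intro N hN τ hτ
  have hN0 : (0:ℝ) < N := by linarith
  have hR0 : (0:ℝ) ≤ (32*Real.pi^4)^(ε₀-1) * (40*(1+1/(r-1))) * τ^ε₀ * N^(-2+4*ε₀) := by
    have h1 : (0:ℝ) ≤ τ^ε₀ := Real.rpow_nonneg hτ.le _
    have h2 : (0:ℝ) ≤ N^(-2+4*ε₀) := Real.rpow_nonneg hN0.le _
    positivity
  apply hfv_tsum_real_le ?hF hR0
  case hF =>
    intro k
    split
    · apply div_nonneg
      · have h1 : Real.exp (-(32 * Real.pi ^ 4 * ((k.1 : ℝ) ^ 2 + (k.2 : ℝ) ^ 2) ^ 2 * τ)) ≤ 1 := by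
          rw [← Real.exp_zero]
          apply Real.exp_le_exp.mpr
          have : (0:ℝ) ≤ 32 * Real.pi ^ 4 * ((k.1 : ℝ) ^ 2 + (k.2 : ℝ) ^ 2) ^ 2 * τ := by positivity
          linarith
        linarith
      · positivity
    · exact le_refl 0
  -- now the ENNReal estimate
  set c : ℝ := N / Real.sqrt 2 with hcdef
  have hs2 : (0:ℝ) < Real.sqrt 2 := Real.sqrt_pos.mpr (by norm_num)
  have hc : 0 < c := div_pos hN0 hs2
  -- notation
  set q : ℤ × ℤ → ℝ := fun k => (k.1 : ℝ)^2 + (k.2 : ℝ)^2 with hqdef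
  have hq_nonneg : ∀ k, 0 ≤ q k := fun k => by rw [hqdef]; positivity
  -- region facts
  have hregion : ∀ k : ℤ × ℤ, N < Real.sqrt (q k) → 1 < q k ∧ (c < |(k.1:ℝ)| ∨ c < |(k.2:ℝ)|) := by
    intro k hk
    have hNq : N^2 < q k := (Real.lt_sqrt hN0.le).mp hk
    have h1 : 1 < q k := by nlinarith
    constructor
    · exact h1
    · have hc2 : c^2 = N^2/2 := by
        rw [hcdef, div_pow, Real.sq_sqrt (by norm_num : (0:ℝ) ≤ 2)]
      rcases le_or_gt ((k.1:ℝ)^2) (N^2/2) with h2 | h2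
      · right
        have h3 : N^2/2 < (k.2:ℝ)^2 := by
          have : q k = (k.1:ℝ)^2 + (k.2:ℝ)^2 := by rw [hqdef]
          nlinarith
        apply lt_of_pow_lt_pow_left₀ 2 (abs_nonneg _)
        rw [sq_abs]
        rw [hc2]
        exact h3
      · left
        apply lt_of_pow_lt_pow_left₀ 2 (abs_nonneg _)
        rw [sq_abs, hc2]
        exact h2
  -- ENNReal chain
  set A : ℤ × ℤ → ENNReal := fun k =>
    if c < |(k.1:ℝ)| then ENNReal.ofReal (|(k.1:ℝ)| ^ (4*ε₀-2) * ((q k)⁻¹)) else 0 with hAdef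
  set B : ℤ × ℤ → ENNReal := fun k =>
    if c < |(k.2:ℝ)| then ENNReal.ofReal (|(k.2:ℝ)| ^ (4*ε₀-2) * ((q k)⁻¹)) else 0 with hBdef
  set G : ℤ × ℤ → ENNReal := fun k =>
    if N < Real.sqrt (q k) then ENNReal.ofReal ((q k) ^ (2*ε₀-2)) else 0 with hGdef
  have step1 : ∀ k : ℤ × ℤ,
      ENNReal.ofReal (if N < Real.sqrt (q k) then
          (1 - Real.exp (-(32 * Real.pi ^ 4 * (q k) ^ 2 * τ))) / (32 * Real.pi ^ 4 * (q k) ^ 2)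
        else 0)
      ≤ ENNReal.ofReal (τ^ε₀ * (32*Real.pi^4)^(ε₀-1)) * G k := by
    intro k
    simp only [hGdef]
    by_cases h : N < Real.sqrt (q k)
    · rw [if_pos h, if_pos h]
      have hq1 : 1 < q k := (hregion k h).1
      have hq0 : 0 < q k := by linarith
      have ha : 0 < 32 * Real.pi ^ 4 * (q k) ^ 2 := by positivity
      have hb := hfv_pointwise hε0 (by linarith : ε₀ ≤ 1) hτ ha
      rw [← ENNReal.ofReal_mul (by positivity : (0:ℝ) ≤ τ^ε₀ * (32*Real.pi^4)^(ε₀-1))]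
      apply ENNReal.ofReal_le_ofReal
      refine hb.trans (le_of_eq ?_)
      have e : (32 * Real.pi ^ 4 * (q k) ^ 2) ^ (ε₀-1)
          = (32*Real.pi^4)^(ε₀-1) * (q k) ^ (2*ε₀-2) := by
        rw [Real.mul_rpow (by positivity) (by positivity)]
        congr 1
        rw [← Real.rpow_natCast (q k) 2, ← Real.rpow_mul hq0.le]
        congr 1
        push_cast
        ring
      rw [e]
      ring
    · rw [if_neg h, if_neg h]
      simp
  have step2 : ∀ k : ℤ × ℤ, G k ≤ A k + B k := by
    intro k
    simp only [hGdef, hAdef, hBdef]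
    by_cases h : N < Real.sqrt (q k)
    · rw [if_pos h]
      obtain ⟨hq1, hcase⟩ := hregion k h
      have hq0 : 0 < q k := by linarith
      have key : ∀ x : ℝ, c < |x| → x^2 ≤ q k →
          (q k) ^ (2*ε₀-2) ≤ |x| ^ (4*ε₀-2) * (q k)⁻¹ := by
        intro x hx hxq
        have hx0 : 0 < |x| := lt_trans hc hx
        have hx2 : (0:ℝ) < x^2 := by rw [← sq_abs]; positivity
        have e1 : (q k) ^ (2*ε₀-2) = (q k) ^ (2*ε₀-1) * (q k)⁻¹ := by
          rw [show (2*ε₀-2 : ℝ) = (2*ε₀-1) + (-1) by ring, Real.rpow_add hq0,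
            Real.rpow_neg_one]
        rw [e1]
        have e2 : (q k) ^ (2*ε₀-1) ≤ (x^2) ^ (2*ε₀-1) :=
          rpow_le_rpow_of_nonpos hx2 hxq (by linarith)
        have e3 : (x^2 : ℝ) ^ (2*ε₀-1) = |x| ^ (4*ε₀-2) := by
          rw [← sq_abs, ← Real.rpow_natCast |x| 2, ← Real.rpow_mul (abs_nonneg x)]
          norm_num
          rw [show (2:ℝ) * (2*ε₀-1) = 4*ε₀-2 by ring]
        rw [e3] at e2
        have hinv : (0:ℝ) ≤ (q k)⁻¹ := by positivity
        exact mul_le_mul_of_nonneg_right e2 hinv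
      rcases hcase with h1 | h1
      · rw [if_pos h1]
        refine le_trans ?_ le_self_add
        apply ENNReal.ofReal_le_ofReal
        apply key _ h1
        simp only [hqdef]
        nlinarith [sq_nonneg ((k.2:ℝ))]
      · rw [if_pos h1]
        refine le_trans ?_ le_add_self
        apply ENNReal.ofReal_le_ofReal
        apply key _ h1
        simp only [hqdef]
        nlinarith [sq_nonneg ((k.1:ℝ))]
    · rw [if_neg h]
      exact zero_le
  -- bound on sum of A
  have hc1r : (0:ℝ) ≤ c ^ (1-r) := Real.rpow_nonneg hc.le _
  have htail := hfv_tail_sum_int hr hc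
  have hA : ∑' k : ℤ × ℤ, A k ≤ ENNReal.ofReal (5 * (2 * ((1 + 1/(r-1)) * c ^ (1-r)))) := by
    simp only [hAdef]
    rw [ENNReal.tsum_prod (f := fun (m n : ℤ) =>
      if c < |(m:ℝ)| then ENNReal.ofReal (|(m:ℝ)| ^ (4*ε₀-2) * (((m:ℝ)^2 + (n:ℝ)^2)⁻¹)) else 0)]
    calc ∑' (m : ℤ), ∑' (n : ℤ), (if c < |(m:ℝ)| then
            ENNReal.ofReal (|(m:ℝ)| ^ (4*ε₀-2) * (((m:ℝ)^2 + (n:ℝ)^2)⁻¹)) else 0)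
        ≤ ∑' (m : ℤ), (if c < |(m:ℝ)| then ENNReal.ofReal (5 * |(m:ℝ)| ^ (-(3-4*ε₀))) else 0) :=
          ENNReal.tsum_le_tsum (fun m => hfv_row hε2 hc m)
      _ = ∑' (m : ℤ), ENNReal.ofReal 5 * (if c < |(m:ℝ)| then ENNReal.ofReal (|(m:ℝ)| ^ (-r)) else 0) := by
          apply tsum_congr
          intro m
          rw [hrdef]
          split
          · rw [← ENNReal.ofReal_mul (by norm_num : (0:ℝ) ≤ 5)]
          · rw [mul_zero]
      _ = ENNReal.ofReal 5 * ∑' (m : ℤ), (if c < |(m:ℝ)| then ENNReal.ofReal (|(m:ℝ)| ^ (-r)) else 0) :=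
          ENNReal.tsum_mul_left
      _ ≤ ENNReal.ofReal 5 * ENNReal.ofReal (2 * ((1 + 1/(r-1)) * c ^ (1-r))) :=
          mul_le_mul_right htail _
      _ = ENNReal.ofReal (5 * (2 * ((1 + 1/(r-1)) * c ^ (1-r)))) := by
          rw [← ENNReal.ofReal_mul (by norm_num : (0:ℝ) ≤ 5)]
  have hB : ∑' k : ℤ × ℤ, B k ≤ ENNReal.ofReal (5 * (2 * ((1 + 1/(r-1)) * c ^ (1-r)))) := by
    simp only [hBdef]
    rw [ENNReal.tsum_prod (f := fun (m n : ℤ) =>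
      if c < |(n:ℝ)| then ENNReal.ofReal (|(n:ℝ)| ^ (4*ε₀-2) * (((m:ℝ)^2 + (n:ℝ)^2)⁻¹)) else 0)]
    rw [ENNReal.tsum_comm (f := fun (m n : ℤ) =>
      if c < |(n:ℝ)| then ENNReal.ofReal (|(n:ℝ)| ^ (4*ε₀-2) * (((m:ℝ)^2 + (n:ℝ)^2)⁻¹)) else 0)]
    calc ∑' (n : ℤ), ∑' (m : ℤ), (if c < |(n:ℝ)| then
            ENNReal.ofReal (|(n:ℝ)| ^ (4*ε₀-2) * (((m:ℝ)^2 + (n:ℝ)^2)⁻¹)) else 0)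
        = ∑' (n : ℤ), ∑' (m : ℤ), (if c < |(n:ℝ)| then
            ENNReal.ofReal (|(n:ℝ)| ^ (4*ε₀-2) * (((n:ℝ)^2 + (m:ℝ)^2)⁻¹)) else 0) := by
          apply tsum_congr; intro n; apply tsum_congr; intro m
          rw [add_comm ((m:ℝ)^2) ((n:ℝ)^2)]
      _ ≤ ∑' (n : ℤ), (if c < |(n:ℝ)| then ENNReal.ofReal (5 * |(n:ℝ)| ^ (-(3-4*ε₀))) else 0) :=
          ENNReal.tsum_le_tsum (fun n => hfv_row hε2 hc n)
      _ = ∑' (n : ℤ), ENNReal.ofReal 5 * (if c < |(n:ℝ)| then ENNReal.ofReal (|(n:ℝ)| ^ (-r)) else 0) := by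
          apply tsum_congr
          intro m
          rw [hrdef]
          split
          · rw [← ENNReal.ofReal_mul (by norm_num : (0:ℝ) ≤ 5)]
          · rw [mul_zero]
      _ = ENNReal.ofReal 5 * ∑' (n : ℤ), (if c < |(n:ℝ)| then ENNReal.ofReal (|(n:ℝ)| ^ (-r)) else 0) :=
          ENNReal.tsum_mul_left
      _ ≤ ENNReal.ofReal 5 * ENNReal.ofReal (2 * ((1 + 1/(r-1)) * c ^ (1-r))) :=
          mul_le_mul_right htail _
      _ = ENNReal.ofReal (5 * (2 * ((1 + 1/(r-1)) * c ^ (1-r)))) := by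
          rw [← ENNReal.ofReal_mul (by norm_num : (0:ℝ) ≤ 5)]
  -- c ^ (1-r) ≤ 2 * N ^ (1-r)
  have hcN : c ^ (1-r) ≤ 2 * N ^ (1-r) := by
    have e1 : c ^ (1-r) = N ^ (1-r) * (Real.sqrt 2) ^ (r-1) := by
      rw [hcdef, Real.div_rpow hN0.le (Real.sqrt_nonneg 2)]
      rw [show (1-r : ℝ) = -(r-1) by ring, Real.rpow_neg (Real.sqrt_nonneg 2)]
      rw [div_eq_mul_inv, inv_inv]
    rw [e1]
    have e2 : (Real.sqrt 2) ^ (r-1) ≤ 2 := by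
      have h1 : (1:ℝ) ≤ Real.sqrt 2 := by
        rw [show (1:ℝ) = Real.sqrt 1 by rw [Real.sqrt_one]]
        exact Real.sqrt_le_sqrt (by norm_num)
      have h2 : (Real.sqrt 2) ^ (r-1) ≤ (Real.sqrt 2) ^ ((2:ℕ):ℝ) :=
        Real.rpow_le_rpow_of_exponent_le h1 (by push_cast; rw [hrdef]; linarith)
      have h3 : (Real.sqrt 2) ^ ((2:ℕ):ℝ) = 2 := by
        rw [Real.rpow_natCast, Real.sq_sqrt (by norm_num : (0:ℝ) ≤ 2)]
      linarith
    have h4 : (0:ℝ) ≤ N ^ (1-r) := Real.rpow_nonneg hN0.le _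
    calc N ^ (1-r) * (Real.sqrt 2) ^ (r-1) ≤ N ^ (1-r) * 2 :=
          mul_le_mul_of_nonneg_left e2 h4
      _ = 2 * N ^ (1-r) := by ring
  -- final assembly
  calc ∑' k : ℤ × ℤ, ENNReal.ofReal (if N < Real.sqrt (q k) then
          (1 - Real.exp (-(32 * Real.pi ^ 4 * (q k) ^ 2 * τ))) / (32 * Real.pi ^ 4 * (q k) ^ 2)
        else 0)
      ≤ ∑' k : ℤ × ℤ, ENNReal.ofReal (τ^ε₀ * (32*Real.pi^4)^(ε₀-1)) * G k :=
        ENNReal.tsum_le_tsum step1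
    _ = ENNReal.ofReal (τ^ε₀ * (32*Real.pi^4)^(ε₀-1)) * ∑' k : ℤ × ℤ, G k :=
        ENNReal.tsum_mul_left
    _ ≤ ENNReal.ofReal (τ^ε₀ * (32*Real.pi^4)^(ε₀-1)) *
          ENNReal.ofReal (20 * ((1 + 1/(r-1)) * (2 * N ^ (1-r)))) := by
        apply mul_le_mul_right
        calc ∑' k : ℤ × ℤ, G k ≤ ∑' k : ℤ × ℤ, (A k + B k) := ENNReal.tsum_le_tsum step2
          _ = ∑' k : ℤ × ℤ, A k + ∑' k : ℤ × ℤ, B k := ENNReal.tsum_add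
          _ ≤ ENNReal.ofReal (5 * (2 * ((1 + 1/(r-1)) * c ^ (1-r))))
              + ENNReal.ofReal (5 * (2 * ((1 + 1/(r-1)) * c ^ (1-r)))) := add_le_add hA hB
          _ = ENNReal.ofReal (20 * ((1 + 1/(r-1)) * c ^ (1-r))) := by
              rw [← ENNReal.ofReal_add (by positivity) (by positivity)]
              congr 1
              ring
          _ ≤ ENNReal.ofReal (20 * ((1 + 1/(r-1)) * (2 * N ^ (1-r)))) := by
              apply ENNReal.ofReal_le_ofReal
              have := mul_le_mul_of_nonneg_left hcN hK.le
              nlinarith [this]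
    _ ≤ ENNReal.ofReal ((32*Real.pi^4)^(ε₀-1) * (40*(1+1/(r-1))) * τ^ε₀ * N^(-2+4*ε₀)) := by
        rw [← ENNReal.ofReal_mul (by positivity : (0:ℝ) ≤ τ^ε₀ * (32*Real.pi^4)^(ε₀-1))]
        apply ENNReal.ofReal_le_ofReal
        apply le_of_eq
        rw [show (-2 + 4*ε₀ : ℝ) = 1 - r by rw [hrdef]; ring]
        ring
end
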